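/- arXiv:2509.11808 — 5 statements merged into one kernel-verified Lean document; each statement's English description precedes it below -/
import Mathlib

section
/- Let n ≥ 1, and let σ² : Fin n → ℝ with σ²ᵢ > 0, μ : Fin n → ℝ with μᵢ > 0, and z : Fin n → ℝ with zᵢ > 0. Define v(z) = (∑ⱼ μⱼ/zⱼ)⁻² · ∑ₖ μₖ²σₖ²/zₖ². Then v(z) ≥ (∑ₖ 1/σₖ²)⁻¹. -/
open Finset

/-- Sedrakyan's form of Cauchy–Schwarz, `(∑ f)² / ∑ g ≤ ∑ f² / g`, applied with `g = 1 / w`. -/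
theorem Finset.inv_sum_inv_le_sum_sq_mul_div_sq_sum {ι : Type*} (s : Finset ι) (f w : ι → ℝ)
    (hw : ∀ i ∈ s, 0 < w i) (hf : ∑ i ∈ s, f i ≠ 0) :
    (∑ i ∈ s, 1 / w i)⁻¹ ≤ (∑ i ∈ s, f i ^ 2 * w i) / (∑ i ∈ s, f i) ^ 2 := by
  have hB : 0 < ∑ i ∈ s, 1 / w i :=
    sum_pos (fun i hi => one_div_pos.2 (hw i hi)) (nonempty_of_sum_ne_zero hf)
  have sedrakyan := sq_sum_div_le_sum_sq_div s f (fun i hi => one_div_pos.2 (hw i hi))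
  simp only [div_div_eq_mul_div, div_one] at sedrakyan
  rwa [le_div_iff₀ (by positivity), inv_mul_le_iff₀ hB, ← div_le_iff₀' hB]

theorem consensus_variance_lower_bound (n : ℕ) (hn : 1 ≤ n)
    (σ2 μ z : Fin n → ℝ)
    (hσ : ∀ i, 0 < σ2 i) (hμ : ∀ i, 0 < μ i) (hz : ∀ i, 0 < z i) :
    ((∑ j, μ j / z j) ^ 2)⁻¹ * ∑ k, (μ k) ^ 2 * σ2 k / (z k) ^ 2 ≥
      (∑ k, 1 / σ2 k)⁻¹ := by
  have hS : ∑ j, μ j / z j ≠ 0 :=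
    (sum_pos (fun i _ => div_pos (hμ i) (hz i)) (univ_nonempty_iff.2 ⟨⟨0, hn⟩⟩)).ne'
  have h := inv_sum_inv_le_sum_sq_mul_div_sq_sum univ (fun j => μ j / z j) σ2
    (fun i _ => hσ i) hS
  simp only [div_pow, div_mul_eq_mul_div] at h
  rwa [inv_mul_eq_div]
end

section
/- Let n ≥ 1, σ² : Fin n → ℝ positive, μ : Fin n → ℝ positive, z : Fin n → ℝ positive. Define v(z) = (∑ⱼ μⱼ/zⱼ)⁻² · ∑ₖ μₖ²σₖ²/zₖ². Then v(z) = (∑ₖ 1/σₖ²)⁻¹ if and only if there exists α > 0 such that zᵢ = α·μᵢ·σᵢ² for all i. -/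
/-!
With weights `wᵢ = 1/σᵢ²` and ratios `rᵢ = zᵢ/(μᵢσᵢ²)` the variance becomes
`v(z) = (∑ wᵢ tᵢ²) / (∑ wᵢ tᵢ)²` with `tᵢ = rᵢ⁻¹`, so by the weighted Cauchy–Schwarz
inequality `(∑ wᵢ tᵢ)² ≤ (∑ wᵢ)(∑ wᵢ tᵢ²)` it is at least `(∑ wᵢ)⁻¹`. Lagrange's identity writes the
defect of this inequality as `½ ∑ᵢⱼ wᵢwⱼ(tᵢ - tⱼ)²`, so equality holds exactly when all the
ratios `rᵢ` agree, i.e. when `z` is proportional to `μσ²`.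
-/

open Finset

theorem sum_sum_mul_mul_sub_sq {ι R : Type*} [Fintype ι] [CommRing R] (w t : ι → R) :
    ∑ i, ∑ j, w i * w j * (t i - t j) ^ 2 =
      2 * ((∑ i, w i) * (∑ i, w i * t i ^ 2) - (∑ i, w i * t i) ^ 2) := by
  have expand : ∀ i j, w i * w j * (t i - t j) ^ 2 =
      w i * t i ^ 2 * w j - 2 * (w i * t i * (w j * t j)) + w i * (w j * t j ^ 2) := by
    intro i j; ring
  simp only [expand, sum_add_distrib, sum_sub_distrib, ← mul_sum, ← sum_mul]
  ring

section OrderedField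

variable {ι R : Type*} [Field R] [LinearOrder R] [IsStrictOrderedRing R]

theorem forall_eq_iff_exists_pos_forall_eq {t : ι → R} (ht : ∀ i, 0 < t i) :
    (∀ i j, t i = t j) ↔ ∃ c, 0 < c ∧ ∀ i, t i = c := by
  refine ⟨fun h => ?_, fun ⟨c, _, hc⟩ i j => (hc i).trans (hc j).symm⟩
  rcases isEmpty_or_nonempty ι with hι | ⟨⟨i₀⟩⟩
  · exact ⟨1, zero_lt_one, isEmptyElim⟩
  · exact ⟨t i₀, ht i₀, fun i => h i i₀⟩

variable [Fintype ι]

theorem sq_sum_mul_eq_sum_mul_sum_mul_sq_iff {w : ι → R} (hw : ∀ i, 0 < w i) (t : ι → R) :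
    (∑ i, w i * t i) ^ 2 = (∑ i, w i) * ∑ i, w i * t i ^ 2 ↔ ∀ i j, t i = t j := by
  have hterm : ∀ i j, 0 ≤ w i * w j * (t i - t j) ^ 2 := fun i j => by
    have := hw i; have := hw j; positivity
  have hdefect : (∑ i, w i * t i) ^ 2 = (∑ i, w i) * ∑ i, w i * t i ^ 2 ↔
      ∑ i, ∑ j, w i * w j * (t i - t j) ^ 2 = 0 := by
    rw [sum_sum_mul_mul_sub_sq, mul_eq_zero, sub_eq_zero, eq_comm]
    simp only [two_ne_zero, false_or]
  rw [hdefect, sum_eq_zero_iff_of_nonneg fun i _ => sum_nonneg fun j _ => hterm i j]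
  refine forall_congr' fun i => ?_
  rw [sum_eq_zero_iff_of_nonneg fun j _ => hterm i j]
  simp only [mem_univ, true_implies]
  refine forall_congr' fun j => ?_
  simp only [mul_eq_zero, (mul_pos (hw i) (hw j)).ne', false_or,
    pow_eq_zero_iff two_ne_zero, sub_eq_zero]

theorem inv_sq_sum_mul_sum_eq_inv_sum_iff {w t : ι → R} (hw : ∀ i, 0 < w i)
    (ht : ∀ i, 0 < t i) :
    ((∑ i, w i * t i) ^ 2)⁻¹ * ∑ i, w i * t i ^ 2 = (∑ i, w i)⁻¹ ↔
      (∑ i, w i * t i) ^ 2 = (∑ i, w i) * ∑ i, w i * t i ^ 2 := by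
  rcases isEmpty_or_nonempty ι with hι | hι
  · simp
  have hW : 0 < ∑ i, w i := sum_pos (fun i _ => hw i) univ_nonempty
  have hWT : 0 < ∑ i, w i * t i := sum_pos (fun i _ => mul_pos (hw i) (ht i)) univ_nonempty
  rw [inv_mul_eq_iff_eq_mul₀ (by positivity), ← div_eq_mul_inv, eq_div_iff hW.ne']
  constructor <;> intro h <;> linarith

end OrderedField

theorem consensus_variance_eq_iff_optimal_general (n : ℕ)
    (σ2 μ z : Fin n → ℝ)
    (hσ : ∀ i, 0 < σ2 i) (hμ : ∀ i, 0 < μ i) (hz : ∀ i, 0 < z i) :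
    ((∑ j, μ j / z j) ^ 2)⁻¹ * ∑ k, (μ k) ^ 2 * σ2 k / (z k) ^ 2 =
      (∑ k, 1 / σ2 k)⁻¹ ↔
    ∃ α : ℝ, 0 < α ∧ ∀ i, z i = α * μ i * σ2 i := by
  set r : Fin n → ℝ := fun i => z i / (μ i * σ2 i)
  have hr : ∀ i, 0 < r i := fun i => div_pos (hz i) (mul_pos (hμ i) (hσ i))
  have hw : ∀ i, 0 < 1 / σ2 i := fun i => one_div_pos.mpr (hσ i)
  have hmean : ∀ j, μ j / z j = 1 / σ2 j * (r j)⁻¹ := fun j => by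
    have := (hσ j).ne'; have := (hμ j).ne'; have := (hz j).ne'; simp only [r]; field_simp
  have hsq : ∀ k, μ k ^ 2 * σ2 k / z k ^ 2 = 1 / σ2 k * (r k)⁻¹ ^ 2 := fun k => by
    have := (hσ k).ne'; have := (hμ k).ne'; have := (hz k).ne'; simp only [r]; field_simp
  simp only [hmean, hsq]
  rw [inv_sq_sum_mul_sum_eq_inv_sum_iff hw fun i => inv_pos.mpr (hr i),
    sq_sum_mul_eq_sum_mul_sum_mul_sq_iff hw]
  simp only [inv_inj]
  rw [forall_eq_iff_exists_pos_forall_eq hr]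
  refine exists_congr fun α => and_congr_right fun _ => forall_congr' fun i => ?_
  simp only [r]
  rw [div_eq_iff (mul_pos (hμ i) (hσ i)).ne', mul_assoc]

theorem consensus_variance_eq_iff_optimal (n : ℕ) (hn : 1 ≤ n)
    (σ2 μ z : Fin n → ℝ)
    (hσ : ∀ i, 0 < σ2 i) (hμ : ∀ i, 0 < μ i) (hz : ∀ i, 0 < z i) :
    ((∑ j, μ j / z j) ^ 2)⁻¹ * ∑ k, (μ k) ^ 2 * σ2 k / (z k) ^ 2 =
      (∑ k, 1 / σ2 k)⁻¹ ↔
    ∃ α : ℝ, 0 < α ∧ ∀ i, z i = α * μ i * σ2 i :=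
  consensus_variance_eq_iff_optimal_general n σ2 μ z hσ hμ hz
end

section
/- Let W be an n×n nonnegative matrix whose associated directed graph is strongly connected (W irreducible), and let L = diag(W·1) − W be its Laplacian. Then there exists a unique vector μ ∈ ℝⁿ with Lᵀμ = 0, ∑ᵢ μᵢ = 1, and μᵢ > 0 for all i. -/
/-!
For a left null vector `μ` of `L = diag(W 1) - W` the balance equations
`μ_j d_j = ∑_i μ_i W_ij` (with `d = W 1`) force equality in the triangle inequality
`|∑_i μ_i W_ij| ≤ ∑_i |μ_i| W_ij`, because both sides sum over `j` to `∑_j |μ_j| d_j`.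
Hence positivity of `μ` spreads along every edge of the graph of `W`, and by strong connectivity
a left null vector with one positive entry is positive. So a nonzero left null vector cannot have
entry sum `0`: since `L 1 = 0` there is one, normalising it gives `μ`, and the difference of two
normalised ones has sum `0`, hence vanishes.
-/

open Finset Matrix

/-- The directed graph of positive entries of `W` is strongly connected. -/
def StronglyConnectedMat {n : ℕ} (W : Matrix (Fin n) (Fin n) ℝ) : Prop :=
  ∀ i j : Fin n, i ≠ j → Relation.TransGen (fun a b => 0 < W a b) i j

namespace Matrix

variable {ι R : Type*} [Fintype ι] [DecidableEq ι]

def laplacian [Ring R] (W : Matrix ι ι R) : Matrix ι ι R :=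
  diagonal (W *ᵥ 1) - W

section Ring

variable [Ring R]

theorem laplacian_mulVec_one (W : Matrix ι ι R) : W.laplacian *ᵥ 1 = 0 := by
  ext i
  simp [laplacian, sub_mulVec, mulVec_diagonal]

theorem vecMul_laplacian (W : Matrix ι ι R) (μ : ι → R) :
    μ ᵥ* W.laplacian = μ * (W *ᵥ 1) - μ ᵥ* W := by
  ext j
  simp [laplacian, vecMul_sub, vecMul_diagonal]

theorem vecMul_eq_of_vecMul_laplacian_eq_zero {W : Matrix ι ι R} {μ : ι → R}
    (hμ : μ ᵥ* W.laplacian = 0) : μ ᵥ* W = μ * (W *ᵥ 1) := by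
  rwa [vecMul_laplacian, sub_eq_zero, eq_comm] at hμ

end Ring

theorem exists_vecMul_laplacian_eq_zero [CommRing R] [IsDomain R] [Nonempty ι]
    (W : Matrix ι ι R) : ∃ μ ≠ 0, μ ᵥ* W.laplacian = 0 :=
  exists_vecMul_eq_zero_iff.mpr <|
    exists_mulVec_eq_zero_iff.mp ⟨1, one_ne_zero, laplacian_mulVec_one W⟩

section LinearOrderedField

variable [Field R] [LinearOrder R] [IsStrictOrderedRing R] {W : Matrix ι ι R} {μ : ι → R}

theorem abs_vecMul_eq_of_vecMul_laplacian_eq_zero (hW : ∀ i j, 0 ≤ W i j)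
    (hμ : μ ᵥ* W.laplacian = 0) (j : ι) : |(μ ᵥ* W) j| = (|μ| ᵥ* W) j := by
  have hle : ∀ j, |(μ ᵥ* W) j| ≤ (|μ| ᵥ* W) j := fun j =>
    calc |∑ i, μ i * W i j| ≤ ∑ i, |μ i * W i j| := abs_sum_le_sum_abs _ _
      _ = ∑ i, |μ i| * W i j := by simp only [abs_mul, abs_of_nonneg (hW _ j)]
  have hdeg : ∀ i, 0 ≤ (W *ᵥ 1) i := fun i => sum_nonneg fun k _ => by simpa using hW i k
  have hsum : ∑ j, |(μ ᵥ* W) j| = ∑ j, (|μ| ᵥ* W) j :=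
    calc ∑ j, |(μ ᵥ* W) j| = ∑ j, |μ j| * (W *ᵥ 1) j := by
          simp only [vecMul_eq_of_vecMul_laplacian_eq_zero hμ, Pi.mul_apply, abs_mul,
            abs_of_nonneg, hdeg]
      _ = ∑ j, (|μ| ᵥ* W) j := by
          rw [← dotProduct_one (|μ| ᵥ* W), ← dotProduct_mulVec]
          rfl
  exact (sum_eq_sum_iff_of_le fun j _ => hle j).mp hsum j (mem_univ j)

theorem pos_of_vecMul_laplacian_eq_zero_of_pos_of_pos (hW : ∀ i j, 0 ≤ W i j)
    (hμ : μ ᵥ* W.laplacian = 0) {a b : ι} (hab : 0 < W a b) (ha : 0 < μ a) : 0 < μ b := by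
  by_contra! hb
  have hnonpos : (μ ᵥ* W) b ≤ 0 := by
    rw [vecMul_eq_of_vecMul_laplacian_eq_zero hμ]
    exact mul_nonpos_of_nonpos_of_nonneg hb (sum_nonneg fun k _ => by simpa using hW b k)
  -- equality in the triangle inequality at `b` makes every term of `∑ (|μ i| + μ i) W i b` vanish
  have hzero : ((|μ| + μ) ᵥ* W) b = 0 := by
    rw [add_vecMul, Pi.add_apply, ← abs_vecMul_eq_of_vecMul_laplacian_eq_zero hW hμ,
      abs_of_nonpos hnonpos, neg_add_cancel]
  have hnonneg : ∀ i ∈ univ, 0 ≤ (|μ| + μ) i * W i b := fun i _ => by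
    simp only [Pi.add_apply, Pi.abs_apply]
    exact mul_nonneg (by linarith [neg_abs_le (μ i)]) (hW i b)
  have hterm := (sum_eq_zero_iff_of_nonneg hnonneg).mp hzero a (mem_univ a)
  have : 0 < (|μ a| + μ a) * W a b := mul_pos (by positivity) hab
  exact this.ne' hterm

theorem pos_of_vecMul_laplacian_eq_zero_of_pos (hW : ∀ i j, 0 ≤ W i j)
    (hirr : ∀ i j, i ≠ j → Relation.TransGen (fun a b => 0 < W a b) i j)
    (hμ : μ ᵥ* W.laplacian = 0) {a : ι} (ha : 0 < μ a) (j : ι) : 0 < μ j := by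
  rcases eq_or_ne a j with rfl | hne
  · exact ha
  have hpath := hirr a j hne
  clear hne
  induction hpath with
  | single hab => exact pos_of_vecMul_laplacian_eq_zero_of_pos_of_pos hW hμ hab ha
  | tail _ hbc ih => exact pos_of_vecMul_laplacian_eq_zero_of_pos_of_pos hW hμ hbc ih

theorem eq_zero_of_vecMul_laplacian_eq_zero_of_sum_eq_zero (hW : ∀ i j, 0 ≤ W i j)
    (hirr : ∀ i j, i ≠ j → Relation.TransGen (fun a b => 0 < W a b) i j)
    (hμ : μ ᵥ* W.laplacian = 0) (hsum : ∑ i, μ i = 0) : μ = 0 := by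
  by_contra hne
  obtain ⟨a, -, ha⟩ := exists_pos_of_sum_zero_of_exists_nonzero μ hsum
    (by simpa [funext_iff] using hne)
  have hpos := sum_pos (fun j _ => pos_of_vecMul_laplacian_eq_zero_of_pos hW hirr hμ ha j)
    ⟨a, mem_univ a⟩
  exact hpos.ne' hsum

theorem pos_of_vecMul_laplacian_eq_zero_of_sum_eq_one (hW : ∀ i j, 0 ≤ W i j)
    (hirr : ∀ i j, i ≠ j → Relation.TransGen (fun a b => 0 < W a b) i j)
    (hμ : μ ᵥ* W.laplacian = 0) (hsum : ∑ i, μ i = 1) (j : ι) : 0 < μ j := by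
  obtain ⟨a, -, ha⟩ := exists_lt_of_sum_lt (s := univ) (f := 0) (g := μ) (by simp [hsum])
  exact pos_of_vecMul_laplacian_eq_zero_of_pos hW hirr hμ ha j

end LinearOrderedField

end Matrix

theorem laplacian_left_perron (n : ℕ) (hn : 1 ≤ n)
    (W : Matrix (Fin n) (Fin n) ℝ)
    (hW : ∀ i j, 0 ≤ W i j) (hirr : StronglyConnectedMat W) :
    ∃! μ : Fin n → ℝ,
      (Matrix.diagonal (W.mulVec 1) - W)ᵀ.mulVec μ = 0 ∧
      (∑ i, μ i = 1) ∧ (∀ i, 0 < μ i) := by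
  have : Nonempty (Fin n) := ⟨⟨0, hn⟩⟩
  simp only [mulVec_transpose]
  change ∃! μ : Fin n → ℝ, μ ᵥ* W.laplacian = 0 ∧ ∑ i, μ i = 1 ∧ ∀ i, 0 < μ i
  obtain ⟨ν, hν0, hν⟩ := exists_vecMul_laplacian_eq_zero W
  have hνsum : ∑ i, ν i ≠ 0 := fun h =>
    hν0 (eq_zero_of_vecMul_laplacian_eq_zero_of_sum_eq_zero hW hirr hν h)
  set μ := (∑ i, ν i)⁻¹ • ν
  have hμ : μ ᵥ* W.laplacian = 0 := by rw [smul_vecMul, hν, smul_zero]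
  have hμsum : ∑ i, μ i = 1 := by
    simp only [μ, Pi.smul_apply, smul_eq_mul, ← mul_sum, inv_mul_cancel₀ hνsum]
  refine ⟨μ, ⟨hμ, hμsum, pos_of_vecMul_laplacian_eq_zero_of_sum_eq_one hW hirr hμ hμsum⟩, ?_⟩
  rintro μ' ⟨hμ', hμ'sum, -⟩
  rw [← sub_eq_zero]
  refine eq_zero_of_vecMul_laplacian_eq_zero_of_sum_eq_zero hW hirr ?_ ?_
  · rw [sub_vecMul, hμ', hμ, sub_zero]
  · simp only [Pi.sub_apply, sum_sub_distrib, hμ'sum, hμsum, sub_self]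
end

section
/- Let y : Fin n → ℝ be positive, and let M(y) be a matrix with nonnegative entries such that M(y)'s associated graph is strongly connected. Then ∑ⱼ mᵢⱼ(y)(yⱼ − yᵢ) = 0 for all i if and only if y is a constant vector. -/
/-! A maximum principle: at a maximal component the weighted sum `∑ⱼ mᵢⱼ (yⱼ - yᵢ)` is a sum of
nonpositive terms, so if it vanishes every out-neighbour of `i` is maximal too. Strong
connectivity carries this from a global maximiser to every vertex. -/

open Finset Matrix

theorem eq_of_sum_mul_sub_eq_zero_of_le {ι : Type*} [Fintype ι] {w y : ι → ℝ} {c : ℝ} {b : ι}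
    (hw : ∀ j, 0 ≤ w j) (hy : ∀ j, y j ≤ c) (hsum : ∑ j, w j * (y j - c) = 0) (hb : 0 < w b) :
    y b = c := by
  have hnonpos : ∀ j ∈ univ, w j * (y j - c) ≤ 0 := fun j _ =>
    mul_nonpos_of_nonneg_of_nonpos (hw j) (sub_nonpos.2 (hy j))
  have hterm := (sum_eq_zero_iff_of_nonpos hnonpos).1 hsum b (mem_univ b)
  exact sub_eq_zero.1 ((mul_eq_zero.1 hterm).resolve_left hb.ne')

theorem eq_of_transGen_of_forall_le {ι : Type*} [Fintype ι] {m : Matrix ι ι ℝ}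
    (hm : ∀ i j, 0 ≤ m i j) {y : ι → ℝ} (heq : ∀ i, ∑ j, m i j * (y j - y i) = 0) {a b : ι}
    (hmax : ∀ j, y j ≤ y a) (hab : Relation.TransGen (fun i j => 0 < m i j) a b) :
    y b = y a := by
  induction hab with
  | single hab => exact eq_of_sum_mul_sub_eq_zero_of_le (hm a) hmax (heq a) hab
  | @tail c _ _ hcb ih =>
    have hmax' : ∀ j, y j ≤ y c := ih ▸ hmax
    exact ih ▸ eq_of_sum_mul_sub_eq_zero_of_le (hm c) hmax' (heq c) hcb

theorem equilibrium_iff_consensus_general (n : ℕ)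
    (m : Matrix (Fin n) (Fin n) ℝ)
    (hm : ∀ i j, 0 ≤ m i j) (hirr : StronglyConnectedMat m)
    (y : Fin n → ℝ) :
    (∀ i, ∑ j, m i j * (y j - y i) = 0) ↔ ∃ c : ℝ, ∀ i, y i = c := by
  refine ⟨fun heq => ?_, fun ⟨c, hc⟩ i => by simp [hc]⟩
  cases isEmpty_or_nonempty (Fin n)
  · exact ⟨0, isEmptyElim⟩
  obtain ⟨a, hmax⟩ := Finite.exists_max y
  refine ⟨y a, fun i => ?_⟩
  rcases eq_or_ne a i with rfl | hai
  · rfl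
  · exact eq_of_transGen_of_forall_le hm heq hmax (hirr a i hai)

theorem equilibrium_iff_consensus (n : ℕ)
    (m : Matrix (Fin n) (Fin n) ℝ)
    (hm : ∀ i j, 0 ≤ m i j) (hirr : StronglyConnectedMat m)
    (y : Fin n → ℝ) (hy : ∀ i, 0 < y i) :
    (∀ i, ∑ j, m i j * (y j - y i) = 0) ↔ ∃ c : ℝ, ∀ i, y i = c :=
  equilibrium_iff_consensus_general n m hm hirr y
end

section
/- Let f : ℝⁿ → ℝⁿ be locally Lipschitz on (0,∞)ⁿ of the form fᵢ(y) = ∑ⱼ mᵢⱼ(y)(yⱼ − yᵢ) with mᵢⱼ(y) ≥ 0, and suppose a solution y(t), t ≥ 0, is bounded, remains in a compact subset of (0,∞)ⁿ, satisfies |yᵢ(t) − yⱼ(t)| → 0 as t → ∞ for all i, j, and every constant positive vector is a Lyapunov stable equilibrium. Then y(t) converges to a single point c·1 with c > 0. -/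
/-! The trajectory stays in a compact set, so it has a cluster point `v`. Asymptotic agreement
forces `v = c • 1`, and `c > 0` because the compact set lies in the positive orthant. Lyapunov
stability of `v` upgrades the cluster point to a limit: once the trajectory enters the
`δ`-ball around `v`, it never leaves the `ε`-ball. -/

open Filter Topology

theorem MapClusterPt.eq_of_tendsto_comp {α X Y : Type*} [TopologicalSpace X] [TopologicalSpace Y]
    [T2Space Y] {l : Filter α} {u : α → X} {v : X} {g : X → Y} {a : Y}
    (hv : MapClusterPt v l u) (hg : ContinuousAt g v) (hgu : Tendsto (g ∘ u) l (𝓝 a)) :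
    g v = a :=
  eq_of_nhds_neBot <| ClusterPt.mono (hv.continuousAt_comp hg) hgu

theorem MapClusterPt.eq_of_tendsto_sub {α ι : Type*} {l : Filter α} {y : α → ι → ℝ}
    {v : ι → ℝ} (hv : MapClusterPt v l y)
    (hagree : ∀ i j, Tendsto (fun t => y t i - y t j) l (𝓝 0)) (i j : ι) : v i = v j :=
  sub_eq_zero.mp <| hv.eq_of_tendsto_comp (g := fun w : ι → ℝ => w i - w j)
    (by fun_prop) (hagree i j)

theorem tendsto_atTop_of_mapClusterPt_of_stable {ι X : Type*} [Preorder ι]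
    [PseudoMetricSpace X] {y : ι → X} {v : X} {a : ι} (hv : MapClusterPt v atTop y)
    (hstable : ∀ ε > (0 : ℝ), ∃ δ > (0 : ℝ),
      ∀ t₀, a ≤ t₀ → dist (y t₀) v < δ → ∀ t, t₀ ≤ t → dist (y t) v < ε) :
    Tendsto y atTop (𝓝 v) := by
  refine Metric.tendsto_nhds.mpr fun ε hε => ?_
  obtain ⟨δ, hδ, hδε⟩ := hstable ε hε
  obtain ⟨t₀, ht₀, hyt₀⟩ : ∃ t₀, a ≤ t₀ ∧ dist (y t₀) v < δ :=
    ((hv.frequently (Metric.ball_mem_nhds v hδ)).and_eventually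
      (eventually_ge_atTop a)).exists.imp fun _ h => ⟨h.2, h.1⟩
  filter_upwards [eventually_ge_atTop t₀] with t ht
  exact hδε t₀ ht₀ hyt₀ t ht

theorem convergence_to_consensus_point_general (n : ℕ) (hn : 0 < n)
    (y : ℝ → Fin n → ℝ)
    (K : Set (Fin n → ℝ)) (hK : IsCompact K)
    (hKpos : K ⊆ {v : Fin n → ℝ | ∀ i, 0 < v i})
    (hyK : ∀ t : ℝ, 0 ≤ t → y t ∈ K)
    (hagree : ∀ i j, Tendsto (fun t => y t i - y t j) atTop (nhds 0))
    (hstable : ∀ c : ℝ, 0 < c → ∀ ε > (0 : ℝ), ∃ δ > (0 : ℝ),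
      ∀ t₀ : ℝ, 0 ≤ t₀ → dist (y t₀) (fun _ => c) < δ →
        ∀ t, t₀ ≤ t → dist (y t) (fun _ => c) < ε) :
    ∃ c : ℝ, 0 < c ∧ Tendsto y atTop (nhds fun _ => c) := by
  obtain ⟨v, hvK, hv⟩ := hK.exists_mapClusterPt_of_frequently
    ((eventually_ge_atTop 0).mono hyK).frequently
  let i₀ : Fin n := ⟨0, hn⟩
  have hv_const : v = fun _ => v i₀ := funext fun i => hv.eq_of_tendsto_sub hagree i i₀
  have hc : 0 < v i₀ := hKpos hvK i₀
  rw [hv_const] at hv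
  exact ⟨v i₀, hc, tendsto_atTop_of_mapClusterPt_of_stable hv (hstable _ hc)⟩

theorem convergence_to_consensus_point (n : ℕ) (hn : 0 < n)
    (m : (Fin n → ℝ) → Fin n → Fin n → ℝ)
    (hm_nonneg : ∀ v : Fin n → ℝ, (∀ i, 0 < v i) → ∀ i j, 0 ≤ m v i j)
    (hm_lip : ∀ v : Fin n → ℝ, (∀ i, 0 < v i) →
      ∃ ε > (0 : ℝ), ∃ L : NNReal, ∀ i j,
        LipschitzOnWith L (fun w => m w i j) (Metric.ball v ε))
    (y : ℝ → Fin n → ℝ)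
    (hderiv : ∀ t : ℝ, 0 ≤ t → ∀ i,
      HasDerivAt (fun s => y s i) (∑ j, m (y t) i j * (y t j - y t i)) t)
    (K : Set (Fin n → ℝ)) (hK : IsCompact K)
    (hKpos : K ⊆ {v : Fin n → ℝ | ∀ i, 0 < v i})
    (hyK : ∀ t : ℝ, 0 ≤ t → y t ∈ K)
    (hagree : ∀ i j, Tendsto (fun t => y t i - y t j) atTop (nhds 0))
    (hstable : ∀ c : ℝ, 0 < c → ∀ ε > (0 : ℝ), ∃ δ > (0 : ℝ),
      ∀ t₀ : ℝ, 0 ≤ t₀ → dist (y t₀) (fun _ => c) < δ →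
        ∀ t, t₀ ≤ t → dist (y t) (fun _ => c) < ε) :
    ∃ c : ℝ, 0 < c ∧ Tendsto y atTop (nhds fun _ => c) :=
  convergence_to_consensus_point_general n hn y K hK hKpos hyK hagree hstable
end
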